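/- arXiv:1612.01893 — 4 statements merged into one kernel-verified Lean document; each statement's English description precedes it below -/
import Mathlib

section
/- Let m be a natural number, n = 2m+1, and 0 < x_0 < x_1 < ... < x_m be real numbers. Then there exists a unique even polynomial P(x) = sum_{i=0}^{n} a_i x^{2i} of degree at most 2n satisfying P(x_j) = x_j and P'(x_j) = 1 for all j = 0,...,m, and this polynomial satisfies P(x) ≥ |x| for all real x. -/
open Polynomial Finset

lemma sq_dvd_of_isRoot {p : ℝ[X]} {a : ℝ} (h1 : p.eval a = 0) (h2 : p.derivative.eval a = 0) :
    (X - C a)^2 ∣ p := by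
  obtain ⟨q, rfl⟩ := dvd_iff_isRoot.2 h1
  have hq : q.eval a = 0 := by
    have := h2
    simp [derivative_mul] at this
    simpa using this
  obtain ⟨r, rfl⟩ := dvd_iff_isRoot.2 hq
  exact ⟨r, by ring⟩

lemma isRoot_of_sq_dvd {p : ℝ[X]} {a : ℝ} (h : (X - C a)^2 ∣ p) :
    p.eval a = 0 ∧ p.derivative.eval a = 0 := by
  obtain ⟨q, rfl⟩ := h
  constructor <;> simp [derivative_mul, derivative_pow]

lemma sum_comp' (f : ℕ → ℝ[X]) (q : ℝ[X]) (n : ℕ) :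
    (∑ i ∈ Finset.range n, f i).comp q = ∑ i ∈ Finset.range n, (f i).comp q :=
  map_sum (compRingHom q) f (Finset.range n)

lemma evenRep (p : ℝ[X]) (n : ℕ) (hd : p.natDegree < 2*n)
    (h : ∀ i, Odd i → p.coeff i = 0) :
    p = (∑ i ∈ Finset.range n, C (p.coeff (2*i)) * X^i).comp (X^2) := by
  ext k
  rw [sum_comp', finset_sum_coeff]
  have : ∀ i ∈ Finset.range n, ((C (p.coeff (2*i)) * X^i).comp (X^2)).coeff k
      = if 2*i = k then p.coeff (2*i) else 0 := by
    intro i _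
    rw [mul_comp, C_comp, pow_comp, X_comp, ← pow_mul, coeff_C_mul, coeff_X_pow, mul_comm 2 i]
    split <;> simp_all [eq_comm]
  rw [Finset.sum_congr rfl this]
  rcases Nat.even_or_odd k with ⟨j, hj⟩ | hk
  · subst hj
    rcases lt_or_ge j n with hjn | hjn
    · rw [Finset.sum_eq_single j] <;> intros <;> simp_all [two_mul] <;> omega
    · rw [Finset.sum_eq_zero, Polynomial.coeff_eq_zero_of_natDegree_lt (by omega)]
      intro i hi
      simp only [Finset.mem_range] at hi
      rw [if_neg (by omega)]
  · rw [Finset.sum_eq_zero, h k hk]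
    intro i hi
    rw [if_neg (fun hc => by subst hc; exact ((Nat.not_odd_iff_even.2 ⟨i, two_mul i ▸ rfl⟩)) hk)]

lemma rolle_chain (g : ℕ → ℝ → ℝ)
    (hg : ∀ k, ∀ u : ℝ, 0 < u → HasDerivAt (g k) (g (k+1) u) u) :
    ∀ (n j : ℕ) (z : Fin (n+1) → ℝ), StrictMono z → (∀ i, 0 < z i) →
      (∀ i, g j (z i) = 0) → ∃ c, 0 < c ∧ g (j + n) c = 0 := by
  intro n
  induction n with
  | zero => intro j z _ hz0 hzz; exact ⟨z 0, hz0 0, hzz 0⟩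
  | succ n ih =>
    intro j z hz hz0 hzz
    have key : ∀ i : Fin (n+1), ∃ c, c ∈ Set.Ioo (z i.castSucc) (z i.succ) ∧ g (j+1) c = 0 := by
      intro i
      have hab : z i.castSucc < z i.succ := hz Fin.castSucc_lt_succ
      have hpos : ∀ u ∈ Set.Icc (z i.castSucc) (z i.succ), (0:ℝ) < u :=
        fun u hu => lt_of_lt_of_le (hz0 _) hu.1
      obtain ⟨c, hc, hc0⟩ := exists_hasDerivAt_eq_zero hab
        (fun u hu => ((hg j u (hpos u hu)).continuousAt).continuousWithinAt)
        ((hzz _).trans (hzz _).symm)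
        (fun u hu => hg j u (hpos u (Set.mem_Icc_of_Ioo hu)))
      exact ⟨c, hc, hc0⟩
    choose w hw hw0 using key
    have hwmono : StrictMono w := by
      intro a b hab
      calc w a < z a.succ := (hw a).2
        _ ≤ z b.castSucc := hz.monotone (by
            simp only [Fin.le_def, Fin.val_succ, Fin.coe_castSucc]
            exact hab)
        _ < w b := (hw b).1
    obtain ⟨c, hc0, hc⟩ := ih (j+1) w hwmono (fun i => lt_trans (hz0 _) (hw i).1) hw0
    exact ⟨c, hc0, by rwa [Nat.add_right_comm] at hc⟩

noncomputable def cfun (k : ℕ) : ℝ := ∏ i ∈ Finset.range k, ((1:ℝ)/2 - i)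

lemma cfun_succ (k : ℕ) : cfun (k+1) = cfun k * ((1:ℝ)/2 - k) := Finset.prod_range_succ _ _

lemma cfun_neg : ∀ k : ℕ, cfun (2*k+2) < 0 := by
  intro k
  induction k with
  | zero => simp [cfun, Finset.prod_range_succ]; norm_num
  | succ n ih =>
    have h1 : cfun (2*n+3) = cfun (2*n+2) * ((1:ℝ)/2 - (2*n+2)) := by
      have := cfun_succ (2*n+2); push_cast at this ⊢; convert this using 3 <;> ring
    have h2 : cfun (2*n+4) = cfun (2*n+3) * ((1:ℝ)/2 - (2*n+3)) := by
      have := cfun_succ (2*n+3); push_cast at this ⊢; convert this using 3 <;> ring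
    have e : 2*(n+1)+2 = 2*n+4 := by ring
    rw [e, h2, h1]
    have a1 : ((1:ℝ)/2 - (2*(n:ℝ)+2)) < 0 := by nlinarith [Nat.cast_nonneg (α := ℝ) n]
    have a2 : ((1:ℝ)/2 - (2*(n:ℝ)+3)) < 0 := by nlinarith [Nat.cast_nonneg (α := ℝ) n]
    nlinarith [mul_pos_of_neg_of_neg a1 a2]

noncomputable def gfun (R : ℝ[X]) (k : ℕ) (u : ℝ) : ℝ :=
  (Polynomial.derivative^[k] R).eval u - cfun k * u ^ ((1:ℝ)/2 - k)

lemma hasDerivAt_gfun (R : ℝ[X]) (k : ℕ) (u : ℝ) (hu : 0 < u) :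
    HasDerivAt (gfun R k) (gfun R (k+1) u) u := by
  have h1 := (Polynomial.derivative^[k] R).hasDerivAt u
  rw [show Polynomial.derivative ((Polynomial.derivative^[k]) R)
      = Polynomial.derivative^[k+1] R from (Function.iterate_succ_apply' _ _ _).symm] at h1
  have h2 := (Real.hasDerivAt_rpow_const (x := u) (p := (1:ℝ)/2 - k) (Or.inl hu.ne')).const_mul
    (cfun k)
  have h3 := h1.sub h2
  have e1 : cfun k * (((1:ℝ)/2 - k) * u ^ ((1:ℝ)/2 - k - 1))
      = cfun (k+1) * u ^ ((1:ℝ)/2 - (k+1:ℕ)) := by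
    have e2 : (1:ℝ)/2 - k - 1 = (1:ℝ)/2 - (k+1:ℕ) := by push_cast; ring
    rw [e2, cfun_succ]; ring
  rw [e1] at h3
  exact h3

lemma comp_X_sq_coeff_odd (Q : ℝ[X]) {i : ℕ} (hi : Odd i) : (Q.comp (X^2)).coeff i = 0 := by
  induction Q using Polynomial.induction_on' with
  | add p q hp hq => rw [add_comp, coeff_add, hp, hq, add_zero]
  | monomial n a =>
    rw [monomial_comp, ← pow_mul, coeff_C_mul, coeff_X_pow, if_neg, mul_zero]
    rintro rfl
    exact (Nat.not_odd_iff_even.2 ⟨n, by ring⟩) hi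

lemma comp_X_sq_natDegree_le (Q : ℝ[X]) (k : ℕ) (h : Q.degree < (k+1 : ℕ)) :
    (Q.comp (X^2)).natDegree ≤ 2*k := by
  rcases eq_or_ne Q 0 with rfl | h0
  · simp
  · rw [Polynomial.natDegree_comp]
    have : Q.natDegree < k+1 := by rwa [← Polynomial.natDegree_lt_iff_degree_lt h0] at h
    rw [Polynomial.natDegree_X_pow]
    omega

lemma deriv_comp_X_sq_eval (Q : ℝ[X]) (u : ℝ) :
    (Q.comp (X^2)).derivative.eval u = 2 * u * Q.derivative.eval (u^2) := by
  rw [Polynomial.derivative_comp]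
  simp only [Polynomial.derivative_X_pow, Polynomial.eval_mul, Polynomial.eval_comp,
    Polynomial.eval_pow, Polynomial.eval_X, Polynomial.eval_C, Polynomial.eval_natCast]
  push_cast
  ring

lemma eq_zero_of_double_roots {ι : Type} [Fintype ι] (t : ι → ℝ) (ht : Function.Injective t)
    (p : ℝ[X]) (hdeg : p.degree < (2 * Fintype.card ι : ℕ))
    (hp : ∀ j, p.eval (t j) = 0 ∧ p.derivative.eval (t j) = 0) : p = 0 := by
  by_contra hp0
  have hdvd : (∏ j : ι, (X - C (t j))^2) ∣ p := by
    apply Finset.prod_dvd_of_coprime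
    · intro a _ b _ hab
      exact (Polynomial.pairwise_coprime_X_sub_C ht (fun h => hab h : a ≠ b)).pow
    · exact fun j _ => sq_dvd_of_isRoot (hp j).1 (hp j).2
  have hVdeg : (∏ j : ι, (X - C (t j))^2).natDegree = 2 * Fintype.card ι := by
    rw [Polynomial.natDegree_prod _ _ (fun j _ => pow_ne_zero 2 (X_sub_C_ne_zero (t j)))]
    simp [Polynomial.natDegree_pow, Polynomial.natDegree_X_sub_C, Finset.card_univ, mul_comm]
  have h1 : 2 * Fintype.card ι ≤ p.natDegree := by
    rw [← hVdeg]
    exact Polynomial.natDegree_le_of_dvd hdvd hp0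
  have h2 : p.natDegree < 2 * Fintype.card ι := by
    rwa [← Polynomial.natDegree_lt_iff_degree_lt hp0] at hdeg
  omega

noncomputable def evalMap (n : ℕ) (t : Fin n → ℝ) :
    (Polynomial.degreeLT ℝ (2*n)) →ₗ[ℝ] (Fin n → ℝ) × (Fin n → ℝ) :=
  LinearMap.prod
    (LinearMap.pi fun j => (Polynomial.leval (t j)).comp (Submodule.subtype _))
    (LinearMap.pi fun j => ((Polynomial.leval (t j)).comp Polynomial.derivative).comp
      (Submodule.subtype _))

lemma evalMap_surjective (n : ℕ) (t : Fin n → ℝ) (ht : Function.Injective t) :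
    Function.Surjective (evalMap n t) := by
  have hfd : FiniteDimensional ℝ (Polynomial.degreeLT ℝ (2*n)) :=
    (Polynomial.degreeLTEquiv ℝ (2*n)).symm.finiteDimensional
  have hfr : Module.finrank ℝ (Polynomial.degreeLT ℝ (2*n))
      = Module.finrank ℝ ((Fin n → ℝ) × (Fin n → ℝ)) := by
    rw [(Polynomial.degreeLTEquiv ℝ (2*n)).finrank_eq, Module.finrank_fin_fun,
      Module.finrank_prod, Module.finrank_fin_fun]
    try rw [Module.finrank_fin_fun]
    omega
  rw [← LinearMap.injective_iff_surjective_of_finrank_eq_finrank hfr]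
  intro ⟨p, hp⟩ ⟨q, hq⟩ h
  simp only [evalMap, LinearMap.prod_apply, Function.prod, Prod.mk.injEq] at h
  obtain ⟨h1, h2⟩ := h
  have key : ∀ (r : ℝ[X]) (hr : r ∈ Polynomial.degreeLT ℝ (2*n)),
      (∀ j, r.eval (t j) = 0 ∧ r.derivative.eval (t j) = 0) → r = 0 := by
    intro r hr h0
    refine eq_zero_of_double_roots t ht r ?_ h0
    rw [Polynomial.mem_degreeLT] at hr
    simpa using hr
  have := key (p - q) (sub_mem hp hq) ?_
  · exact Subtype.ext (by simpa [sub_eq_zero] using this)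
  · intro j
    have e1 := congrFun h1 j
    have e2 := congrFun h2 j
    simp only [LinearMap.pi_apply, LinearMap.comp_apply, Submodule.subtype_apply] at e1 e2
    constructor
    · simp only [Polynomial.eval_sub]
      simpa [Polynomial.leval_apply] using sub_eq_zero.2 e1
    · simp only [Polynomial.derivative_sub, Polynomial.eval_sub]
      simpa [Polynomial.leval_apply] using sub_eq_zero.2 e2

lemma sqrt_le_eval (m : ℕ) (Q : ℝ[X]) (hdeg : Q.natDegree ≤ 2*m+1)
    (t : Fin (m+1) → ℝ) (ht : StrictMono t) (ht0 : ∀ j, 0 < t j)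
    (hQ : ∀ j, Q.eval (t j) = Real.sqrt (t j))
    (hQ' : ∀ j, Q.derivative.eval (t j) = 1/(2*Real.sqrt (t j))) :
    ∀ s : ℝ, 0 < s → Real.sqrt s ≤ Q.eval s := by
  intro s hs
  by_contra hlt
  push_neg at hlt
  -- s is not a node
  have hsne : ∀ j, s ≠ t j := by
    intro j hj
    rw [hj, hQ j] at hlt
    exact lt_irrefl _ hlt
  -- the node polynomial W
  set W : ℝ[X] := ∏ j : Fin (m+1), (X - C (t j))^2 with hW
  have hWdvd : ∀ j, (X - C (t j))^2 ∣ W := fun j =>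
    Finset.dvd_prod_of_mem _ (Finset.mem_univ j)
  have hWzero : ∀ j, W.eval (t j) = 0 := fun j => (isRoot_of_sq_dvd (hWdvd j)).1
  have hWzero' : ∀ j, W.derivative.eval (t j) = 0 := fun j => (isRoot_of_sq_dvd (hWdvd j)).2
  have hWs : 0 < W.eval s := by
    rw [hW, Polynomial.eval_prod]
    apply Finset.prod_pos
    intro j _
    have : s - t j ≠ 0 := sub_ne_zero.2 (hsne j)
    simp only [eval_pow, eval_sub, eval_X, eval_C]
    positivity
  have hWmonic : W.Monic := monic_prod_of_monic _ _ (fun j _ => (monic_X_sub_C (t j)).pow 2)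
  have hWdeg : W.natDegree = 2*m+2 := by
    rw [hW, Polynomial.natDegree_prod _ _ (fun j _ => pow_ne_zero 2 (X_sub_C_ne_zero (t j)))]
    simp [Polynomial.natDegree_pow, Polynomial.natDegree_X_sub_C]
    ring
  set ε : ℝ := (Real.sqrt s - Q.eval s) / W.eval s with hε
  have hεpos : 0 < ε := div_pos (sub_pos.2 hlt) hWs
  set R : ℝ[X] := Q + C ε * W with hR
  -- zeros of gfun R 0 and gfun R 1
  have hg0t : ∀ j, gfun R 0 (t j) = 0 := by
    intro j
    simp only [gfun, Function.iterate_zero_apply, hR, eval_add, eval_mul, eval_C, hWzero j,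
      mul_zero, add_zero, hQ j, cfun, Finset.range_zero, Finset.prod_empty]
    rw [Nat.cast_zero, sub_zero, one_mul, ← Real.sqrt_eq_rpow, sub_self]
  have hg0s : gfun R 0 s = 0 := by
    simp only [gfun, Function.iterate_zero_apply, hR, eval_add, eval_mul, eval_C,
      cfun, Finset.range_zero, Finset.prod_empty]
    rw [Nat.cast_zero, sub_zero, one_mul, ← Real.sqrt_eq_rpow, hε,
      div_mul_cancel₀ _ (ne_of_gt hWs)]
    ring
  have hg1t : ∀ j, gfun R 1 (t j) = 0 := by
    intro j
    have hst := Real.sqrt_pos.2 (ht0 j)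
    simp only [gfun, Function.iterate_one, hR, derivative_add, derivative_mul, derivative_C,
      zero_mul, zero_add, eval_add, eval_mul, eval_C, hWzero' j, mul_zero, add_zero, hQ' j]
    have e1 : cfun 1 = 1/2 := by simp [cfun]
    have e2 : (t j) ^ ((1:ℝ)/2 - (1:ℕ)) = (Real.sqrt (t j))⁻¹ := by
      rw [show (1:ℝ)/2 - (1:ℕ) = -(1/2) by push_cast; ring, Real.rpow_neg (ht0 j).le,
        ← Real.sqrt_eq_rpow]
    rw [e1, e2]
    field_simp
    simp
  -- derivative^[2m+2] R is a positive constant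
  have hRtop : ∀ u : ℝ, 0 < u → 0 < (Polynomial.derivative^[2*m+2] R).eval u := by
    intro u hu
    have h1 : Polynomial.derivative^[2*m+2] Q = 0 :=
      iterate_derivative_eq_zero (by omega)
    have h2 : Polynomial.derivative^[2*m+2] R
        = C ε * Polynomial.derivative^[2*m+2] W := by
      rw [hR]
      rw [show (C ε * W : ℝ[X]) = ε • W by rw [Polynomial.smul_eq_C_mul]]
      rw [show (Q + ε • W : ℝ[X]) = Q + ε • W from rfl]
      have : ∀ k : ℕ, Polynomial.derivative^[k] (Q + ε • W)
          = Polynomial.derivative^[k] Q + ε • Polynomial.derivative^[k] W := by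
        intro k
        induction k with
        | zero => simp
        | succ n ih => simp [Function.iterate_succ_apply', ih, derivative_smul]
      rw [this, h1, zero_add, Polynomial.smul_eq_C_mul]
    have h3 : (Polynomial.derivative^[2*m+2] W) = C ((2*m+2).factorial : ℝ) := by
      have hd : (Polynomial.derivative^[2*m+2] W).natDegree ≤ 0 := by
        have := natDegree_iterate_derivative W (2*m+2)
        omega
      rw [Polynomial.eq_C_of_natDegree_le_zero hd, coeff_iterate_derivative, zero_add,
        Nat.descFactorial_self]
      have : W.coeff (2*m+2) = 1 := by
        have := hWmonic.leadingCoeff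
        rwa [Polynomial.leadingCoeff, hWdeg] at this
      rw [this]
      simp
    rw [h2, h3]
    simp only [eval_mul, eval_C]
    positivity
  have hgtop : ∀ u : ℝ, 0 < u → 0 < gfun R (2*m+2) u := by
    intro u hu
    have h1 := hRtop u hu
    have h2 : cfun (2*m+2) * u ^ ((1:ℝ)/2 - (2*m+2:ℕ)) < 0 :=
      mul_neg_of_neg_of_pos (cfun_neg m) (Real.rpow_pos_of_pos hu _)
    unfold gfun
    linarith
  -- Assemble the zero sets
  classical
  set T : Finset ℝ := insert s (Finset.image t Finset.univ) with hT
  have hsT : s ∉ Finset.image t Finset.univ := by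
    simp only [Finset.mem_image, Finset.mem_univ, true_and]
    rintro ⟨j, hj⟩; exact hsne j hj.symm
  have hcardim : (Finset.image t Finset.univ).card = m+1 := by
    rw [Finset.card_image_of_injective _ ht.injective, Finset.card_univ, Fintype.card_fin]
  have hTcard : T.card = m+2 := by
    rw [hT, Finset.card_insert_of_notMem hsT, hcardim]
  have hmemT : ∀ u ∈ T, 0 < u ∧ gfun R 0 u = 0 := by
    intro u hu
    rw [hT, Finset.mem_insert] at hu
    rcases hu with rfl | hu
    · exact ⟨hs, hg0s⟩
    · simp only [Finset.mem_image, Finset.mem_univ, true_and] at hu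
      obtain ⟨j, rfl⟩ := hu
      exact ⟨ht0 j, hg0t j⟩
  set σ := T.orderIsoOfFin hTcard with hσ
  set z : Fin (m+2) → ℝ := fun i => (σ i : ℝ) with hz
  have hzT : ∀ i, z i ∈ T := fun i => (σ i).2
  have hzmono : StrictMono z := fun a b h => σ.strictMono h
  have hgap : ∀ (i : Fin (m+1)) (u : ℝ), u ∈ T →
      ¬(z i.castSucc < u ∧ u < z i.succ) := by
    rintro i u huT ⟨h1, h2⟩
    obtain ⟨i', hi'⟩ := σ.surjective ⟨u, huT⟩
    have hu' : z i' = u := congrArg Subtype.val hi'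
    rw [← hu'] at h1 h2
    have l1 := hzmono.lt_iff_lt.1 h1
    have l2 := hzmono.lt_iff_lt.1 h2
    rw [Fin.lt_def] at l1 l2
    simp only [Fin.coe_castSucc, Fin.val_succ] at l1 l2
    omega
  -- one Rolle step
  have key : ∀ i : Fin (m+1), ∃ c, c ∈ Set.Ioo (z i.castSucc) (z i.succ) ∧ gfun R 1 c = 0 := by
    intro i
    have hab : z i.castSucc < z i.succ := hzmono Fin.castSucc_lt_succ
    have hposI : ∀ u ∈ Set.Icc (z i.castSucc) (z i.succ), (0:ℝ) < u :=
      fun u hu => lt_of_lt_of_le (hmemT _ (hzT i.castSucc)).1 hu.1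
    obtain ⟨c, hc, hc0⟩ := exists_hasDerivAt_eq_zero hab
      (fun u hu => ((hasDerivAt_gfun R 0 u (hposI u hu)).continuousAt).continuousWithinAt)
      (((hmemT _ (hzT i.castSucc)).2).trans ((hmemT _ (hzT i.succ)).2).symm)
      (fun u hu => hasDerivAt_gfun R 0 u (hposI u (Set.mem_Icc_of_Ioo hu)))
    exact ⟨c, hc, hc0⟩
  choose w hw hw0 using key
  have hwmono : StrictMono w := by
    intro a b hab
    calc w a < z a.succ := (hw a).2
      _ ≤ z b.castSucc := hzmono.monotone (by
          simp only [Fin.le_def, Fin.val_succ, Fin.coe_castSucc]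
          exact hab)
      _ < w b := (hw b).1
  have hwpos : ∀ i, 0 < w i := fun i =>
    lt_trans (hmemT _ (hzT i.castSucc)).1 (hw i).1
  have hwT : ∀ i, w i ∉ T := fun i hmem => hgap i (w i) hmem ⟨(hw i).1, (hw i).2⟩
  set U : Finset ℝ := Finset.image t Finset.univ ∪ Finset.image w Finset.univ with hU
  have hdisj : Disjoint (Finset.image t Finset.univ) (Finset.image w Finset.univ) := by
    rw [Finset.disjoint_left]
    intro a ha hb
    simp only [Finset.mem_image, Finset.mem_univ, true_and] at ha hb
    obtain ⟨j, rfl⟩ := ha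
    obtain ⟨i, hi⟩ := hb
    apply hwT i
    rw [hT, hi]
    exact Finset.mem_insert_of_mem (Finset.mem_image_of_mem t (Finset.mem_univ j))
  have hUcard : U.card = 2*m+1+1 := by
    rw [hU, Finset.card_union_of_disjoint hdisj, hcardim,
      Finset.card_image_of_injective _ hwmono.injective, Finset.card_univ, Fintype.card_fin]
    omega
  have hmemU : ∀ u ∈ U, 0 < u ∧ gfun R 1 u = 0 := by
    intro u hu
    rw [hU, Finset.mem_union] at hu
    rcases hu with hu | hu <;>
      simp only [Finset.mem_image, Finset.mem_univ, true_and] at hu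
    · obtain ⟨j, rfl⟩ := hu
      exact ⟨ht0 j, hg1t j⟩
    · obtain ⟨i, rfl⟩ := hu
      exact ⟨hwpos i, hw0 i⟩
  set τ := U.orderIsoOfFin hUcard with hτ
  set zz : Fin (2*m+1+1) → ℝ := fun i => (τ i : ℝ) with hzz
  obtain ⟨c, hc0, hc⟩ := rolle_chain (gfun R) (fun k u hu => hasDerivAt_gfun R k u hu)
    (2*m+1) 1 zz (fun a b h => τ.strictMono h)
    (fun i => (hmemU _ (τ i).2).1) (fun i => (hmemU _ (τ i).2).2)
  rw [show 1 + (2*m+1) = 2*m+2 by omega] at hc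
  exact absurd hc (ne_of_gt (hgtop c hc0))

section Main

variable (m : ℕ) (x : Fin (m + 1) → ℝ)

def Conds (P : ℝ[X]) : Prop :=
  P.natDegree ≤ 2 * (2 * m + 1) ∧ (∀ i, Odd i → P.coeff i = 0) ∧
    ∀ j, P.eval (x j) = x j ∧ P.derivative.eval (x j) = 1

variable (hpos : 0 < x 0) (hmono : StrictMono x)
include hpos hmono

lemma hx_pos : ∀ j, 0 < x j := fun j => lt_of_lt_of_le hpos (hmono.monotone (Fin.zero_le j))

lemma conds_unique (P1 P2 : ℝ[X]) (h1 : Conds m x P1) (h2 : Conds m x P2) : P1 = P2 := by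
  have hx0 := hx_pos m x hpos hmono
  obtain ⟨hd1, ho1, he1⟩ := h1
  obtain ⟨hd2, ho2, he2⟩ := h2
  set R : ℝ[X] := P1 - P2 with hRdef
  have hRdeg : R.natDegree ≤ 2*(2*m+1) := le_trans (Polynomial.natDegree_sub_le _ _) (by omega)
  have hRodd : ∀ i, Odd i → R.coeff i = 0 := by
    intro i hi
    rw [hRdef, Polynomial.coeff_sub, ho1 i hi, ho2 i hi, sub_zero]
  have hRS := evenRep R (2*m+2) (by omega) hRodd
  set S := ∑ i ∈ Finset.range (2*m+2), C (R.coeff (2*i)) * X^i with hS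
  have hRe : ∀ j, R.eval (x j) = 0 := by
    intro j
    rw [hRdef, Polynomial.eval_sub, (he1 j).1, (he2 j).1, sub_self]
  have hRe' : ∀ j, R.derivative.eval (x j) = 0 := by
    intro j
    rw [hRdef, Polynomial.derivative_sub, Polynomial.eval_sub, (he1 j).2, (he2 j).2, sub_self]
  set τ : (Fin (m+1)) ⊕ (Fin (m+1)) → ℝ := Sum.elim x (fun j => -(x j)) with hτ
  have hτinj : Function.Injective τ := by
    rintro (a|a) (b|b) h <;> simp only [hτ, Sum.elim_inl, Sum.elim_inr] at h
    · exact congrArg Sum.inl (hmono.injective h)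
    · exact absurd h (by have := hx0 a; have := hx0 b; intro hc; linarith)
    · exact absurd h (by have := hx0 a; have := hx0 b; intro hc; linarith)
    · exact congrArg Sum.inr (hmono.injective (neg_injective h))
  have hR0 : R = 0 := by
    apply eq_zero_of_double_roots τ hτinj R
    · have hcard : Fintype.card ((Fin (m+1)) ⊕ (Fin (m+1))) = 2*m+2 := by
        simp [Fintype.card_sum]; omega
      rw [hcard]
      calc R.degree ≤ (R.natDegree : WithBot ℕ) := Polynomial.degree_le_natDegree
        _ < ((2*(2*m+2) : ℕ) : WithBot ℕ) := by exact_mod_cast (by omega : R.natDegree < 2*(2*m+2))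
    · rintro (j|j)
      · exact ⟨hRe j, hRe' j⟩
      · have e : τ (Sum.inr j) = -(x j) := rfl
        rw [e]
        constructor
        · rw [hRS, Polynomial.eval_comp]
          simp only [Polynomial.eval_pow, Polynomial.eval_X, neg_sq]
          have := hRe j
          rw [hRS, Polynomial.eval_comp] at this
          simpa using this
        · rw [hRS, deriv_comp_X_sq_eval, neg_sq]
          have := hRe' j
          rw [hRS, deriv_comp_X_sq_eval] at this
          nlinarith [this]
  rw [← sub_eq_zero]
  exact hR0

lemma conds_pos (P : ℝ[X]) (h : Conds m x P) : ∀ y : ℝ, |y| ≤ P.eval y := by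
  have hx0 := hx_pos m x hpos hmono
  obtain ⟨hd, ho, he⟩ := h
  have hPQ := evenRep P (2*m+2) (by omega) ho
  set Q := ∑ i ∈ Finset.range (2*m+2), C (P.coeff (2*i)) * X^i with hQdef
  have hQdeg : Q.natDegree ≤ 2*m+1 := by
    apply le_trans (Polynomial.natDegree_sum_le _ _)
    rw [Finset.fold_max_le]
    constructor
    · omega
    · intro i hi
      simp only [Finset.mem_range] at hi
      exact le_trans (Polynomial.natDegree_C_mul_le _ _) (by
        rw [Polynomial.natDegree_X_pow]; omega)
  set t : Fin (m+1) → ℝ := fun j => (x j)^2 with ht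
  have htmono : StrictMono t := by
    intro a b hab
    show (x a)^2 < (x b)^2
    have h1 := hmono hab
    have h2 := hx0 a
    nlinarith
  have ht0 : ∀ j, 0 < t j := fun j => by
    show (0:ℝ) < (x j)^2
    have := hx0 j
    positivity
  have hsqrt : ∀ j, Real.sqrt (t j) = x j := fun j => Real.sqrt_sq (hx0 j).le
  have hQe : ∀ j, Q.eval (t j) = Real.sqrt (t j) := by
    intro j
    have := (he j).1
    rw [hPQ, Polynomial.eval_comp] at this
    simpa [ht, hsqrt j, Real.sqrt_sq (hx0 j).le] using this
  have hQe' : ∀ j, Q.derivative.eval (t j) = 1/(2*Real.sqrt (t j)) := by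
    intro j
    have := (he j).2
    rw [hPQ, deriv_comp_X_sq_eval] at this
    rw [hsqrt j]
    have hxj := hx0 j
    field_simp at this ⊢
    linarith [this]
  have key := sqrt_le_eval m Q hQdeg t htmono ht0 hQe hQe'
  intro y
  rcases eq_or_ne y 0 with rfl | hy
  · simp only [abs_zero]
    have h0 : P.eval 0 = Q.eval 0 := by rw [hPQ, Polynomial.eval_comp]; norm_num
    rw [h0]
    have hlim : Filter.Tendsto (fun u : ℝ => Q.eval u) (nhdsWithin 0 (Set.Ioi 0))
        (nhds (Q.eval 0)) :=
      ((Polynomial.continuous Q).continuousAt).continuousWithinAt.tendsto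
    refine ge_of_tendsto hlim ?_
    filter_upwards [self_mem_nhdsWithin] with u hu
    exact le_trans (Real.sqrt_nonneg u) (key u hu)
  · have hy2 : 0 < y^2 := by positivity
    have := key (y^2) hy2
    rw [Real.sqrt_sq_eq_abs] at this
    rw [hPQ, Polynomial.eval_comp]
    simpa using this

lemma conds_exists : ∃ P, Conds m x P := by
  have hx0 := hx_pos m x hpos hmono
  set t : Fin (m+1) → ℝ := fun j => (x j)^2 with ht
  have htinj : Function.Injective t := by
    intro a b hab
    apply hmono.injective
    have h1 := hx0 a
    have h2 := hx0 b
    have : (x a)^2 = (x b)^2 := hab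
    nlinarith
  obtain ⟨⟨Q, hQmem⟩, hQ⟩ := evalMap_surjective (m+1) t htinj
    ⟨fun j => x j, fun j => 1/(2 * x j)⟩
  have h1 : ∀ j, Q.eval (t j) = x j := by
    intro j
    have := congrFun (congrArg Prod.fst hQ) j
    simpa [evalMap, Polynomial.leval_apply] using this
  have h2 : ∀ j, Q.derivative.eval (t j) = 1/(2 * x j) := by
    intro j
    have := congrFun (congrArg Prod.snd hQ) j
    simpa [evalMap, Polynomial.leval_apply] using this
  refine ⟨Q.comp (X^2), ?_, ?_, ?_⟩
  · have hdeg : Q.degree < ((2*m+1)+1 : ℕ) := by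
      rw [Polynomial.mem_degreeLT] at hQmem
      have e : 2*(m+1) = (2*m+1)+1 := by omega
      rwa [e] at hQmem
    exact comp_X_sq_natDegree_le Q (2*m+1) hdeg
  · exact fun i hi => comp_X_sq_coeff_odd Q hi
  · intro j
    constructor
    · rw [Polynomial.eval_comp]
      simpa using h1 j
    · rw [deriv_comp_X_sq_eval]
      have := h2 j
      show 2 * x j * Q.derivative.eval ((x j)^2) = 1
      rw [show ((x j)^2 : ℝ) = t j from rfl, this]
      have := hx0 j
      field_simp

end Main

theorem even_hermite_interpolation (m : ℕ) (x : Fin (m + 1) → ℝ)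
    (hpos : 0 < x 0) (hmono : StrictMono x) :
    (∃! P : Polynomial ℝ,
        P.natDegree ≤ 2 * (2 * m + 1) ∧ (∀ i, Odd i → P.coeff i = 0) ∧
        ∀ j, P.eval (x j) = x j ∧ P.derivative.eval (x j) = 1) ∧
    ∀ P : Polynomial ℝ,
      (P.natDegree ≤ 2 * (2 * m + 1) ∧ (∀ i, Odd i → P.coeff i = 0) ∧
        ∀ j, P.eval (x j) = x j ∧ P.derivative.eval (x j) = 1) →
      ∀ y : ℝ, |y| ≤ P.eval y := by
  obtain ⟨P0, hP0⟩ := conds_exists m x hpos hmono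
  exact ⟨⟨P0, hP0, fun P hP => conds_unique m x hpos hmono P P0 hP hP0⟩,
    fun P hP => conds_pos m x hpos hmono P hP⟩
end

section
/- If P is an even polynomial with P(x_m) = x_m at the largest node x_m > 0 and P interpolates with tangency conditions P(x_j) = x_j, P'(x_j) = 1 at interior nodes 0 < x_0 < ... < x_{m-1} < x_m, with P of degree 4m (even number of remaining conditions), then P(x) ≥ |x| for all x in [-x_m, x_m]. -/
/-!
Substituting `t = y²` writes `P = expand 2 p` with `deg p ≤ 2m`, and the claim becomes `√t ≤ p t`
on `[0, x_m²]`, where `p` matches `√` in value and slope at the nodes `t_j = x_j²` (`j < m`) and in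
value at `t_m`. If `p c < √c`, subtract from `p` the positive multiple `K • w` of
`w = (X - t_m) ∏ (X - t_j)²` for which `q = p - K • w` meets `√` at `c` as well. Then `q - √`
vanishes at `m + 2` points and its derivative at the `m` points `t_j`, so Rolle's theorem produces a
zero of the `(2m+1)`-st derivative of `q - √` in `(0, ∞)`. But that derivative is
`-K (2m+1)! - √⁽²ᵐ⁺¹⁾ < 0`, because the odd-order derivatives of `√` are positive.
-/

open Polynomial Finset

theorem exists_finset_deriv_eq_zero_card_le_add_one {S : Set ℝ} (hS : S.OrdConnected)
    {f f' : ℝ → ℝ} (hf : ∀ t ∈ S, HasDerivAt f (f' t) t) {s : Finset ℝ} (hsS : ↑s ⊆ S)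
    (hs : ∀ t ∈ s, f t = 0) :
    ∃ s' : Finset ℝ, ↑s' ⊆ S ∧ (∀ t ∈ s', f' t = 0) ∧ Disjoint s' s ∧ #s ≤ #s' + 1 := by
  have rolle : ∀ a ∈ s, ∀ b ∈ s, a < b → ∃ z ∈ Set.Ioo a b, f' z = 0 := fun a ha b hb hab =>
    have hIcc : Set.Icc a b ⊆ S := hS.out (hsS ha) (hsS hb)
    exists_hasDerivAt_eq_zero hab
      (fun t ht => (hf t (hIcc ht)).continuousAt.continuousWithinAt)
      (by rw [hs a ha, hs b hb]) (fun t ht => hf t (hIcc (Set.Ioo_subset_Icc_self ht)))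
  choose! z hz using rolle
  set t := ((s ×ˢ s).filter fun q => q.1 < q.2).image fun q => z q.1 q.2
  have ht : ∀ u ∈ t, u ∈ S ∧ f' u = 0 := by
    simp only [t, mem_image, mem_filter, mem_product]
    rintro _ ⟨⟨a, b⟩, ⟨⟨ha, hb⟩, hab⟩, rfl⟩
    exact ⟨hS.out (hsS ha) (hsS hb) (Set.Ioo_subset_Icc_self (hz a ha b hb hab).1),
      (hz a ha b hb hab).2⟩
  refine ⟨t \ s, fun u hu => (ht u (mem_sdiff.1 hu).1).1, fun u hu => (ht u (mem_sdiff.1 hu).1).2,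
    sdiff_disjoint, card_le_sdiff_of_interleaved fun a ha b hb hab _ => ?_⟩
  exact ⟨z a b, mem_image_of_mem (fun q : ℝ × ℝ => z q.1 q.2) (a := (a, b))
    (mem_filter.2 ⟨mem_product.2 ⟨ha, hb⟩, hab⟩), (hz a ha b hb hab).1⟩

theorem exists_deriv_seq_eq_zero_of_lt_card {S : Set ℝ} (hS : S.OrdConnected)
    {F : ℕ → ℝ → ℝ} (hF : ∀ n, ∀ t ∈ S, HasDerivAt (F n) (F (n + 1) t) t) {k n : ℕ}
    {s : Finset ℝ} (hsS : ↑s ⊆ S) (hs : ∀ t ∈ s, F n t = 0) (hk : k < #s) :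
    ∃ ξ ∈ S, F (n + k) ξ = 0 := by
  induction k generalizing n s with
  | zero =>
    obtain ⟨t, ht⟩ := card_pos.1 hk
    exact ⟨t, hsS ht, hs t ht⟩
  | succ k ih =>
    obtain ⟨s', hs'S, hs', -, hcard⟩ :=
      exists_finset_deriv_eq_zero_card_le_add_one hS (hF n) hsS hs
    obtain ⟨ξ, hξS, hξ⟩ := ih hs'S hs' (by omega)
    exact ⟨ξ, hξS, by rwa [add_assoc, add_comm 1] at hξ⟩

theorem exists_deriv_seq_eq_zero_of_lt_card_add_card {S : Set ℝ} (hS : S.OrdConnected)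
    {F : ℕ → ℝ → ℝ} (hF : ∀ n, ∀ t ∈ S, HasDerivAt (F n) (F (n + 1) t) t) {s d : Finset ℝ}
    (hsS : ↑s ⊆ S) (hds : d ⊆ s) (hs : ∀ t ∈ s, F 0 t = 0) (hd : ∀ t ∈ d, F 1 t = 0) {k : ℕ}
    (hk : k + 1 < #s + #d) : ∃ ξ ∈ S, F (k + 1) ξ = 0 := by
  obtain ⟨s', hs'S, hs', hdisj, hcard⟩ :=
    exists_finset_deriv_eq_zero_card_le_add_one hS (hF 0) hsS hs
  have hdisj' : Disjoint s' d := hdisj.mono_right hds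
  rw [add_comm]
  refine exists_deriv_seq_eq_zero_of_lt_card hS hF (s := s' ∪ d) ?_ ?_ ?_
  · rw [coe_union]
    exact Set.union_subset hs'S ((coe_subset.2 hds).trans hsS)
  · intro t ht
    rcases mem_union.1 ht with h | h
    exacts [hs' t h, hd t h]
  · rw [card_union_of_disjoint hdisj']; omega

namespace Polynomial

theorem expand_contract_of_coeff_eq_zero {R : Type*} [CommSemiring R] {p : ℕ} (hp : p ≠ 0)
    {f : R[X]} (hf : ∀ n, ¬p ∣ n → f.coeff n = 0) : expand R p (contract p f) = f := by
  ext n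
  rw [coeff_expand (Nat.pos_of_ne_zero hp), coeff_contract hp]
  split_ifs with h
  · rw [Nat.div_mul_cancel h]
  · exact (hf n h).symm

theorem Monic.iterate_derivative_natDegree {R : Type*} [CommSemiring R] {f : R[X]}
    (hf : f.Monic) : derivative^[f.natDegree] f = C (f.natDegree.factorial : R) := by
  rw [eq_C_of_natDegree_le_zero ((natDegree_iterate_derivative f _).trans (by omega)),
    coeff_iterate_derivative, zero_add, Nat.descFactorial_self, hf.coeff_natDegree, nsmul_one]

theorem eval_eq_zero_and_eval_derivative_eq_zero_of_sq_dvd {R : Type*} [CommRing R] {f : R[X]}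
    {a : R} (h : (X - C a) ^ 2 ∣ f) : f.eval a = 0 ∧ f.derivative.eval a = 0 := by
  obtain ⟨g, rfl⟩ := h
  simp [derivative_mul, derivative_pow]

end Polynomial

section HermiteNodePoly

variable {R : Type*} [CommRing R]

noncomputable def hermiteNodePoly (b : R) (d : Finset R) : R[X] :=
  (X - C b) * ∏ t ∈ d, (X - C t) ^ 2

theorem hermiteNodePoly_monic (b : R) (d : Finset R) : (hermiteNodePoly b d).Monic :=
  (monic_X_sub_C b).mul (monic_prod_of_monic _ _ fun t _ => (monic_X_sub_C t).pow 2)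

theorem natDegree_hermiteNodePoly [Nontrivial R] (b : R) (d : Finset R) :
    (hermiteNodePoly b d).natDegree = 2 * #d + 1 := by
  rw [hermiteNodePoly, (monic_X_sub_C b).natDegree_mul
      (monic_prod_of_monic _ _ fun t _ => (monic_X_sub_C t).pow 2),
    natDegree_prod_of_monic _ _ fun t _ => (monic_X_sub_C t).pow 2]
  simp [(monic_X_sub_C _).natDegree_pow, mul_comm, add_comm]

theorem eval_hermiteNodePoly_self (b : R) (d : Finset R) : (hermiteNodePoly b d).eval b = 0 := by
  simp [hermiteNodePoly]

theorem sq_dvd_hermiteNodePoly (b : R) {d : Finset R} {t : R} (ht : t ∈ d) :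
    (X - C t) ^ 2 ∣ hermiteNodePoly b d :=
  (dvd_prod_of_mem _ ht).mul_left _

theorem eval_hermiteNodePoly_neg {K : Type*} [CommRing K] [LinearOrder K] [IsStrictOrderedRing K]
    {b c : K} {d : Finset K} (hcb : c < b) (hcd : c ∉ d) : (hermiteNodePoly b d).eval c < 0 := by
  rw [hermiteNodePoly, eval_mul, eval_prod]
  refine mul_neg_of_neg_of_pos (by simpa using hcb) (prod_pos fun t ht => ?_)
  simp only [eval_pow, eval_sub, eval_X, eval_C]
  exact sq_pos_of_ne_zero (sub_ne_zero.2 fun h => hcd (h ▸ ht))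

theorem iterate_derivative_sub_C_mul_hermiteNodePoly [Nontrivial R] {p : R[X]} (b : R)
    {d : Finset R} (hp : p.natDegree ≤ 2 * #d) (K : R) :
    derivative^[2 * #d + 1] (p - C K * hermiteNodePoly b d) =
      -C (K * (2 * #d + 1).factorial) := by
  have hw := (hermiteNodePoly_monic b d).iterate_derivative_natDegree
  rw [natDegree_hermiteNodePoly] at hw
  rw [iterate_derivative_sub, iterate_derivative_C_mul, hw,
    iterate_derivative_eq_zero (by omega : p.natDegree < 2 * #d + 1), C_mul, zero_sub]

end HermiteNodePoly

theorem descPochhammer_eval_nonneg_of_odd {R : Type*} [CommRing R] [LinearOrder R]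
    [IsStrictOrderedRing R] {r : R} (hr₀ : 0 ≤ r) (hr₁ : r ≤ 1) (k : ℕ) :
    0 ≤ (descPochhammer R (2 * k + 1)).eval r := by
  induction k with
  | zero => simpa using hr₀
  | succ k ih =>
    rw [show 2 * (k + 1) + 1 = 2 * k + 1 + 1 + 1 by ring, descPochhammer_succ_eval,
      descPochhammer_succ_eval, mul_assoc]
    refine mul_nonneg ih (mul_nonneg_of_nonpos_of_nonpos ?_ ?_) <;> push_cast <;>
      linarith [(Nat.cast_nonneg k : (0 : R) ≤ k)]

theorem hasDerivAt_descPochhammer_eval_mul_rpow (r : ℝ) (n : ℕ) {t : ℝ} (ht : t ≠ 0) :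
    HasDerivAt (fun s => (descPochhammer ℝ n).eval r * s ^ (r - n))
      ((descPochhammer ℝ (n + 1)).eval r * t ^ (r - ↑(n + 1))) t := by
  refine ((Real.hasDerivAt_rpow_const (p := r - n) (Or.inl ht)).const_mul _).congr_deriv ?_
  rw [descPochhammer_succ_eval, Nat.cast_succ, sub_add_eq_sub_sub]
  ring

theorem le_eval_of_hermite_interpolation {S : Set ℝ} (hS : S.OrdConnected) {G : ℕ → ℝ → ℝ}
    (hG : ∀ n, ∀ t ∈ S, HasDerivAt (G n) (G (n + 1) t) t) {m : ℕ}
    (hG_nonneg : ∀ t ∈ S, 0 ≤ G (2 * m + 1) t) {p : ℝ[X]} (hp : p.natDegree ≤ 2 * m)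
    {d : Finset ℝ} (hd : #d = m) (hdS : ↑d ⊆ S)
    (hpd : ∀ t ∈ d, p.eval t = G 0 t ∧ p.derivative.eval t = G 1 t)
    {b : ℝ} (hbS : b ∈ S) (hbd : b ∉ d) (hpb : p.eval b = G 0 b)
    {c : ℝ} (hcS : c ∈ S) (hcb : c ≤ b) : G 0 c ≤ p.eval c := by
  by_contra! hlt
  have hcd : c ∉ d := fun h => hlt.ne (hpd c h).1
  have hcb' : c < b := hcb.lt_of_ne fun h => hlt.ne (h ▸ hpb)
  set w := hermiteNodePoly b d
  have hwc : w.eval c < 0 := eval_hermiteNodePoly_neg hcb' hcd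
  have hwd : ∀ t ∈ d, w.eval t = 0 ∧ w.derivative.eval t = 0 := fun t ht =>
    eval_eq_zero_and_eval_derivative_eq_zero_of_sq_dvd (sq_dvd_hermiteNodePoly b ht)
  set K := (p.eval c - G 0 c) / w.eval c
  have hK : 0 < K := div_pos_of_neg_of_neg (sub_neg.2 hlt) hwc
  set q := p - C K * w
  set F : ℕ → ℝ → ℝ := fun n t => (derivative^[n] q).eval t - G n t
  have hF : ∀ n, ∀ t ∈ S, HasDerivAt (F n) (F (n + 1) t) t := fun n t ht => by
    simpa only [F, Function.iterate_succ_apply'] using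
      ((derivative^[n] q).hasDerivAt t).fun_sub (hG n t ht)
  have hF₀ : ∀ t ∈ insert c (insert b d), F 0 t = 0 := by
    intro t ht
    simp only [F, q, Function.iterate_zero_apply, eval_sub, eval_mul, eval_C, sub_eq_zero]
    rcases mem_insert.1 ht with rfl | ht
    · rw [div_mul_cancel₀ _ hwc.ne]; ring
    rcases mem_insert.1 ht with rfl | ht
    · rw [eval_hermiteNodePoly_self, hpb]; ring
    · rw [(hwd t ht).1, (hpd t ht).1]; ring
  have hF₁ : ∀ t ∈ d, F 1 t = 0 := by
    intro t ht
    simp only [F, q, Function.iterate_one, derivative_sub, derivative_C_mul, eval_sub, eval_mul,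
      eval_C, sub_eq_zero]
    rw [(hwd t ht).2, (hpd t ht).2]; ring
  have hcard : #(insert c (insert b d)) = m + 2 := by
    rw [card_insert_of_notMem, card_insert_of_notMem hbd, hd]
    simpa [not_or] using ⟨hcb'.ne, hcd⟩
  obtain ⟨ξ, hξS, hξ⟩ := exists_deriv_seq_eq_zero_of_lt_card_add_card hS hF (k := 2 * m)
    (by simpa [Set.insert_subset_iff] using ⟨hcS, hbS, hdS⟩)
    ((subset_insert _ _).trans (subset_insert _ _)) hF₀ hF₁ (by omega)
  have hFξ : F (2 * m + 1) ξ = -(K * (2 * m + 1).factorial) - G (2 * m + 1) ξ := by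
    subst hd
    simp only [F, q, w, iterate_derivative_sub_C_mul_hermiteNodePoly b hp K, eval_neg, eval_C]
  have hKpos : 0 < K * (2 * m + 1).factorial := by positivity
  linarith [hG_nonneg ξ hξS]

theorem sqrt_le_eval_of_hermite_interpolation {m : ℕ} {p : ℝ[X]} (hp : p.natDegree ≤ 2 * m)
    {d : Finset ℝ} (hd : #d = m) (hd_pos : ∀ t ∈ d, 0 < t)
    (hpd : ∀ t ∈ d, p.eval t = √t ∧ p.derivative.eval t = 1 / (2 * √t))
    {b : ℝ} (hb : 0 < b) (hbd : b ∉ d) (hpb : p.eval b = √b) {c : ℝ} (hc : c ∈ Set.Icc 0 b) :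
    √c ≤ p.eval c := by
  have hG₀ : ∀ t : ℝ, (descPochhammer ℝ 0).eval (1 / 2) * t ^ ((1 / 2 : ℝ) - (0 : ℕ)) = √t :=
    fun t => by simp [Real.sqrt_eq_rpow]
  have hG₁ : ∀ t : ℝ, 0 < t →
      (descPochhammer ℝ 1).eval (1 / 2) * t ^ ((1 / 2 : ℝ) - (1 : ℕ)) = 1 / (2 * √t) :=
    fun t ht => by
      rw [Real.sqrt_eq_rpow, one_div (2 * _), mul_inv, ← Real.rpow_neg ht.le]
      norm_num
  have hle : ∀ c ∈ Set.Ioc 0 b, √c ≤ p.eval c := fun c hc => hG₀ c ▸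
    le_eval_of_hermite_interpolation Set.ordConnected_Ioi
      (G := fun n t => (descPochhammer ℝ n).eval (1 / 2) * t ^ ((1 / 2 : ℝ) - n))
      (fun n t ht => hasDerivAt_descPochhammer_eval_mul_rpow _ n (ne_of_gt ht))
      (fun t ht => mul_nonneg (descPochhammer_eval_nonneg_of_odd (by norm_num) (by norm_num) m)
        (Real.rpow_nonneg (le_of_lt ht) _))
      hp hd hd_pos (fun t ht => by rw [hG₀, hG₁ t (hd_pos t ht)]; exact hpd t ht)
      hb hbd (by rw [hG₀]; exact hpb) hc.1 hc.2
  rcases hc.1.eq_or_lt with rfl | hc₀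
  · -- `√` is not differentiable at `0`, so this case is reached by continuity
    have hsub : Set.Ioc 0 b ⊆ {t | 0 ≤ p.eval t} := fun t ht =>
      (Real.sqrt_nonneg t).trans (hle t ht)
    have := (isClosed_le continuous_const p.continuous).closure_subset_iff.2 hsub
    rw [closure_Ioc hb.ne] at this
    simpa using this ⟨le_rfl, hb.le⟩
  · exact hle c ⟨hc₀, hc.2⟩

theorem abs_le_eval_expand_two_of_tangent {m : ℕ} {p : ℝ[X]} (hp : p.natDegree ≤ 2 * m)
    {d : Finset ℝ} (hd : #d = m) (hd_pos : ∀ y ∈ d, 0 < y)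
    (hpd : ∀ y ∈ d, (expand ℝ 2 p).eval y = y ∧ (derivative (expand ℝ 2 p)).eval y = 1)
    {b : ℝ} (hb : 0 < b) (hbd : b ∉ d) (hpb : (expand ℝ 2 p).eval b = b) {y : ℝ}
    (hy : |y| ≤ b) : |y| ≤ (expand ℝ 2 p).eval y := by
  have hsq : Set.InjOn (fun y : ℝ => y ^ 2) ↑d := fun s hs t ht h =>
    (pow_left_inj₀ (hd_pos s hs).le (hd_pos t ht).le two_ne_zero).1 h
  have hpd' : ∀ t ∈ d.image (· ^ 2), p.eval t = √t ∧ p.derivative.eval t = 1 / (2 * √t) := by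
    simp only [mem_image]
    rintro _ ⟨s, hs, rfl⟩
    obtain ⟨h₀, h₁⟩ := hpd s hs
    rw [expand_eval] at h₀
    rw [derivative_expand, eval_mul, expand_eval] at h₁
    rw [Real.sqrt_sq (hd_pos s hs).le, h₀, eq_div_iff (by linarith [hd_pos s hs])]
    refine ⟨rfl, by simpa [mul_comm] using h₁⟩
  have hbd' : b ^ 2 ∉ d.image (· ^ 2) := by
    simp only [mem_image, not_exists, not_and]
    intro t ht h
    exact hbd (((pow_left_inj₀ (hd_pos t ht).le hb.le two_ne_zero).1 h) ▸ ht)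
  have key := sqrt_le_eval_of_hermite_interpolation hp ((card_image_of_injOn hsq).trans hd)
    (by simp only [mem_image]; rintro _ ⟨t, ht, rfl⟩; exact pow_pos (hd_pos t ht) 2) hpd'
    (pow_pos hb 2) hbd' (by rw [Real.sqrt_sq hb.le, ← expand_eval, hpb])
    ⟨sq_nonneg y, sq_abs y ▸ pow_le_pow_left₀ (abs_nonneg y) hy 2⟩
  rwa [Real.sqrt_sq_eq_abs, ← expand_eval] at key

theorem even_interpolation_one_sided (m : ℕ) (x : Fin (m + 1) → ℝ)
    (hpos : 0 < x 0) (hmono : StrictMono x) (P : Polynomial ℝ)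
    (hdeg : P.natDegree ≤ 4 * m) (heven : ∀ i, Odd i → P.coeff i = 0)
    (htang : ∀ j : Fin (m + 1), (j : ℕ) < m →
      P.eval (x j) = x j ∧ P.derivative.eval (x j) = 1)
    (hlast : P.eval (x (Fin.last m)) = x (Fin.last m)) :
    ∀ y ∈ Set.Icc (-(x (Fin.last m))) (x (Fin.last m)), |y| ≤ P.eval y := by
  intro y hy
  have hP : expand ℝ 2 (contract 2 P) = P := expand_contract_of_coeff_eq_zero two_ne_zero
    fun n hn => heven n (Nat.odd_iff.2 (Nat.two_dvd_ne_zero.1 hn))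
  have hx_pos : ∀ j, 0 < x j := fun j => hpos.trans_le (hmono.monotone (Fin.zero_le j))
  have hx_inj := (hmono.comp Fin.strictMono_castSucc).injective
  rw [← hP] at hdeg htang hlast ⊢
  rw [natDegree_expand] at hdeg
  refine abs_le_eval_expand_two_of_tangent (m := m) (by omega)
    (d := univ.image (x ∘ Fin.castSucc)) ?_ ?_ ?_ (hx_pos _) ?_ hlast (abs_le.2 hy)
  · rw [card_image_of_injective _ hx_inj, card_univ, Fintype.card_fin]
  · simp only [mem_image]
    rintro _ ⟨j, -, rfl⟩
    exact hx_pos _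
  · simp only [mem_image]
    rintro _ ⟨j, -, rfl⟩
    exact htang _ j.isLt
  · simp only [mem_image, not_exists, not_and]
    intro j _ h
    exact (hmono (Fin.castSucc_lt_last j)).ne h
end

section
/- Let T be a tetrahedron in R^3 of volume 1, c the centroid of one of its facets, and X a point in T. Then the volume of the simplex conv{X_1, X_2, X_3, c} for any X_1, X_2, X_3 in T is at most 1/3. -/
/-!
Map `T` onto `conv {x₁, x₂, x₃, c}` by the affine map sending `v 0, v 1, v 2, v 3` to
`x₁, x₂, x₃, c`: the volume is multiplied by the absolute determinant of its linear part, which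
is the determinant of `x₁ - c, x₂ - c, x₃ - c` in the edge basis `v j - v 3` of `T`.
That determinant is linear in each `xᵢ - c`, so its absolute value is convex in each `xᵢ` separately
and is largest when every `xᵢ` is a vertex of `T`. At vertices the vectors `v k - c` have fixed
coordinates in the edge basis, and each of the resulting `4 ^ 3` determinants is `0` or `± 1/3`.
-/

open MeasureTheory Set

namespace MultilinearMap

variable {ι κ E F : Type*} [Fintype ι] [DecidableEq ι] [AddCommGroup E] [Module ℝ E]
  [SeminormedAddCommGroup F] [NormedSpace ℝ F]

theorem exists_norm_le_comp_of_forall_mem_convexHull (f : MultilinearMap ℝ (fun _ : ι => E) F)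
    {p : κ → E} {w : ι → E} (hw : ∀ i, w i ∈ convexHull ℝ (Set.range p)) :
    ∃ σ : ι → κ, ‖f w‖ ≤ ‖f (p ∘ σ)‖ := by
  suffices h : ∀ s : Finset ι, ∃ u : ι → E,
      (∀ i ∈ s, u i ∈ Set.range p) ∧ (∀ i ∉ s, u i = w i) ∧ ‖f w‖ ≤ ‖f u‖ by
    obtain ⟨u, hu, -, hle⟩ := h Finset.univ
    choose σ hσ using fun i => hu i (Finset.mem_univ i)
    refine ⟨σ, ?_⟩
    rwa [show p ∘ σ = u from funext hσ]
  intro s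
  induction s using Finset.induction_on with
  | empty => exact ⟨w, by simp, fun _ _ => rfl, le_rfl⟩
  | insert a s ha ih =>
    obtain ⟨u, hu_mem, hu_eq, hle⟩ := ih
    have hconv : ConvexOn ℝ univ fun x => ‖f.toLinearMap u a x‖ :=
      convexOn_univ_norm.comp_linearMap _
    obtain ⟨_, ⟨k, rfl⟩, hk⟩ :=
      hconv.exists_ge_of_mem_convexHull (subset_univ _) (hu_eq a ha ▸ hw a)
    refine ⟨Function.update u a (p k), fun i hi => ?_, fun i hi => ?_, ?_⟩
    · rcases Finset.mem_insert.1 hi with rfl | his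
      · simp
      · rw [Function.update_of_ne (by rintro rfl; exact ha his)]
        exact hu_mem i his
    · rw [Function.update_of_ne (by rintro rfl; simp at hi)]
      exact hu_eq i fun his => hi (Finset.mem_insert_of_mem his)
    · rw [toLinearMap_apply, toLinearMap_apply, Function.update_eq_self] at hk
      exact hle.trans hk

end MultilinearMap

namespace MeasureTheory.Measure

variable {E : Type*} [NormedAddCommGroup E] [NormedSpace ℝ E] [MeasurableSpace E] [BorelSpace E]
  [FiniteDimensional ℝ E] (μ : Measure E) [μ.IsAddHaarMeasure]

theorem addHaar_image_affineMap (f : E →ᵃ[ℝ] E) (s : Set E) :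
    μ (f '' s) = ENNReal.ofReal |LinearMap.det f.linear| * μ s := by
  have hf : ⇑f = (· + f 0) ∘ f.linear := by
    funext x; exact congrFun f.decomp x
  rw [hf, image_comp, image_add_right, measure_preimage_add_right, addHaar_image_linearMap]

theorem addHaar_convexHull_range_eq {n : ℕ} (b : Module.Basis (Fin n) ℝ E)
    {v : Fin (n + 1) → E} (hb : ∀ j, b j = v j.castSucc - v (Fin.last n)) (w : Fin (n + 1) → E) :
    μ (convexHull ℝ (range w)) =
      ENNReal.ofReal |b.det fun j => w j.castSucc - w (Fin.last n)| *
        μ (convexHull ℝ (range v)) := by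
  set L := b.constr ℝ fun j => w j.castSucc - w (Fin.last n)
  let g : E →ᵃ[ℝ] E := AffineMap.mk' (fun z => L (z - v (Fin.last n)) + w (Fin.last n)) L
    (v (Fin.last n)) fun z => by simp
  have hgv : g ∘ v = w := by
    funext k
    induction k using Fin.lastCases with
    | last => simp [g]
    | cast j =>
      show L (v j.castSucc - v (Fin.last n)) + w (Fin.last n) = w j.castSucc
      rw [← hb, b.constr_basis, sub_add_cancel]
  have hdet : LinearMap.det L = b.det fun j => w j.castSucc - w (Fin.last n) := by
    rw [← mul_one (LinearMap.det L), ← b.det_self, ← b.det_comp]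
    simp [L, Function.comp_def]
  have himage : convexHull ℝ (range w) = g '' convexHull ℝ (range v) := by
    rw [g.image_convexHull, ← range_comp, hgv]
  rw [himage, addHaar_image_affineMap, ← hdet]
  rfl

end MeasureTheory.Measure

theorem AffineIndependent.exists_basis_eq_vsub_last {k V P : Type*} [DivisionRing k]
    [AddCommGroup V] [Module k V] [FiniteDimensional k V] [AddTorsor V P] {n : ℕ}
    {v : Fin (n + 1) → P} (hv : AffineIndependent k v) (hn : Module.finrank k V = n) :
    ∃ b : Module.Basis (Fin n) k V, ∀ j, b j = v j.castSucc -ᵥ v (Fin.last n) := by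
  have hli : LinearIndependent k fun j : Fin n => v j.castSucc -ᵥ v (Fin.last n) := by
    have h := ((affineIndependent_iff_linearIndependent_vsub k v (Fin.last n)).1 hv).comp _
      (finSuccAboveEquiv (Fin.last n)).injective
    simpa [Function.comp_def, finSuccAboveEquiv_apply] using h
  exact ⟨basisOfLinearIndependentOfCardEqFinrank' _ hli (by simp [hn]), by simp⟩

theorem sub_mem_convexHull_range_sub {κ E : Type*} [AddCommGroup E] [Module ℝ E] {p : κ → E}
    {x : E} (c : E) (hx : x ∈ convexHull ℝ (range p)) :
    x - c ∈ convexHull ℝ (range fun k => p k - c) := by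
  have := Set.vadd_mem_vadd_set (a := -c) hx
  rw [← convexHull_vadd, Set.vadd_set_range] at this
  simpa [sub_eq_neg_add] using this

/-- Coordinates of `v k - c` in the basis `v j - v 3`, where `c` is the centroid of
`v 0, v 1, v 2`. -/
noncomputable def faceCentroidCoords (k : Fin 4) (j : Fin 3) : ℝ :=
  (if k = j.castSucc then 1 else 0) - 1 / 3

theorem abs_det_faceCentroidCoords_le (σ : Fin 3 → Fin 4) :
    |Matrix.det (Matrix.of fun i j => faceCentroidCoords (σ j) i)| ≤ 1 / 3 := by
  rw [Matrix.det_fin_three]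
  simp only [Matrix.of_apply, faceCentroidCoords]
  generalize σ 0 = a, σ 1 = b, σ 2 = d
  fin_cases a <;> fin_cases b <;> fin_cases d <;> norm_num [abs_le, Fin.ext_iff]

theorem abs_det_sub_faceCentroid_le {E : Type*} [AddCommGroup E] [Module ℝ E]
    (b : Module.Basis (Fin 3) ℝ E) {v : Fin 4 → E}
    (hb : ∀ j, b j = v j.castSucc - v (Fin.last 3)) (σ : Fin 3 → Fin 4) :
    |b.det fun j => v (σ j) - (3 : ℝ)⁻¹ • (v 0 + v 1 + v 2)| ≤ 1 / 3 := by
  have hcoords :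
      ∀ k, b.repr (v k - (3 : ℝ)⁻¹ • (v 0 + v 1 + v 2)) = faceCentroidCoords k := by
    intro k
    have : v k - (3 : ℝ)⁻¹ • (v 0 + v 1 + v 2) = ∑ j, faceCentroidCoords k j • b j := by
      fin_cases k <;> simp [Fin.sum_univ_three, hb, faceCentroidCoords, Fin.ext_iff] <;> module
    rw [this, b.repr_sum_self]
  rw [b.det_apply]
  convert abs_det_faceCentroidCoords_le σ using 4
  ext i j
  rw [Module.Basis.toMatrix_apply, hcoords]
  rfl

theorem sub_simplex_volume_le_third (v : Fin 4 → (Fin 3 → ℝ))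
    (hv : AffineIndependent ℝ v) (T : Set (Fin 3 → ℝ))
    (hT : T = convexHull ℝ (Set.range v)) (hvol : volume T = 1)
    (c : Fin 3 → ℝ) (hc : c = (3:ℝ)⁻¹ • (v 0 + v 1 + v 2)) :
    ∀ x₁ x₂ x₃ : Fin 3 → ℝ, x₁ ∈ T → x₂ ∈ T → x₃ ∈ T →
      volume (convexHull ℝ ({x₁, x₂, x₃, c} : Set (Fin 3 → ℝ))) ≤ 1 / 3 := by
  intro x₁ x₂ x₃ h₁ h₂ h₃
  obtain ⟨b, hb⟩ := hv.exists_basis_eq_vsub_last (by simp)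
  set w : Fin 4 → Fin 3 → ℝ := ![x₁, x₂, x₃, c]
  have hw : ∀ j : Fin 3, w j.castSucc - c ∈ convexHull ℝ (range fun k => v k - c) := by
    intro j
    refine sub_mem_convexHull_range_sub c (hT ▸ ?_)
    fin_cases j <;> assumption
  obtain ⟨σ, hσ⟩ := b.det.toMultilinearMap.exists_norm_le_comp_of_forall_mem_convexHull hw
  have hrange : range w = {x₁, x₂, x₃, c} := by
    ext y; simp [w, eq_comm]; tauto
  rw [← hrange, Measure.addHaar_convexHull_range_eq volume b hb, ← hT, hvol, mul_one]
  calc ENNReal.ofReal |b.det fun j => w j.castSucc - w (Fin.last 3)|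
      ≤ ENNReal.ofReal (1 / 3) :=
        ENNReal.ofReal_le_ofReal (hσ.trans (hc ▸ abs_det_sub_faceCentroid_le b hb σ))
    _ = 1 / 3 := by rw [ENNReal.ofReal_div_of_pos three_pos]; simp
end

section
/- Let X_1, X_2, X_3 be independent uniform random points in a tetrahedron T of volume 1 and c the centroid of a facet of T. Then E[vol(conv{X_1,X_2,X_3,c})^2] = 1/2000. -/
/-!
An affine map `A` carries the corner tetrahedron `S = conv {0, e₀, e₁, e₂}` onto `T`, with
`|det A| = 6` because `vol T = 1`, and carries `c₀ = (1/3, 1/3, 1/3)` to `c`. Volumes scale by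
`|det A|` and `vol conv {p, q, r, s} = |D(p, q, r, s)| / 6` with `D` a 3×3 determinant, so the
expectation equals `6³ ∫_{S³} D(u₁, u₂, u₃, c₀)²`.

`D` is affine in each argument, and for an affine `ℓ` the Dirichlet moments of `S` give
`∫_S ℓ² = (ℓ(0)² + Σᵢ ℓ(eᵢ)² + 16 ℓ(g)²) / 120`, where `g` is the centroid of `S`. Applying this
quadrature rule in each variable turns the triple integral into a finite sum, equal to
`1 / 432000`; and `216 / 432000 = 1 / 2000`.
-/

open MeasureTheory Set
open scoped Nat

section AffineChangeOfVariables

variable {E : Type*} [NormedAddCommGroup E] [NormedSpace ℝ E] [MeasurableSpace E] [BorelSpace E]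
  [FiniteDimensional ℝ E] (μ : Measure E) [μ.IsAddHaarMeasure]

theorem addHaar_image_affineMap (f : E →ᵃ[ℝ] E) (s : Set E) :
    μ (f '' s) = ENNReal.ofReal |LinearMap.det f.linear| * μ s := by
  rw [f.decomp, ← Measure.addHaar_image_linearMap μ f.linear s]
  have : (⇑f.linear + fun _ => f 0) '' s = (· + f 0) '' (f.linear '' s) := by
    rw [image_image]; rfl
  rw [this, image_add_right, measure_preimage_add_right]

theorem setIntegral_image_affineMap {F : Type*} [NormedAddCommGroup F] [NormedSpace ℝ F]
    (f : E →ᵃ[ℝ] E) (hf : Function.Injective f) {s : Set E} (hs : MeasurableSet s) (g : E → F) :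
    ∫ x in f '' s, g x ∂μ = |LinearMap.det f.linear| • ∫ x in s, g (f x) ∂μ := by
  have hderiv : ∀ x ∈ s, HasFDerivWithinAt f f.linear.toContinuousLinearMap s x := fun x _ => by
    rw [f.decomp]
    exact (f.linear.toContinuousLinearMap.hasFDerivAt.add_const (f 0)).hasFDerivWithinAt
  rw [integral_image_eq_integral_abs_det_fderiv_smul μ hs hderiv hf.injOn,
    LinearMap.det_toContinuousLinearMap, integral_smul]

end AffineChangeOfVariables

theorem AffineMap.injective_of_det_linear_ne_zero {E : Type*} [AddCommGroup E] [Module ℝ E]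
    [Module.Finite ℝ E] (f : E →ᵃ[ℝ] E) (hf : LinearMap.det f.linear ≠ 0) :
    Function.Injective f := by
  rw [← AffineMap.linear_injective_iff]
  exact ((Module.End.isUnit_iff _).mp ((LinearMap.isUnit_iff_isUnit_det _).mpr hf.isUnit)).injective

theorem setIntegral_prod_dependent {α β E : Type*} [MeasurableSpace α] [MeasurableSpace β]
    [NormedAddCommGroup E] [NormedSpace ℝ E] {μ : Measure α} {ν : Measure β} [SFinite μ]
    [SFinite ν] {A : Set α} {B : α → Set β} (hA : MeasurableSet A)
    (hAB : MeasurableSet {p : α × β | p.1 ∈ A ∧ p.2 ∈ B p.1}) {f : α × β → E}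
    (hf : IntegrableOn f {p | p.1 ∈ A ∧ p.2 ∈ B p.1} (μ.prod ν)) :
    ∫ p in {p : α × β | p.1 ∈ A ∧ p.2 ∈ B p.1}, f p ∂μ.prod ν =
      ∫ x in A, ∫ y in B x, f (x, y) ∂ν ∂μ := by
  set P := {p : α × β | p.1 ∈ A ∧ p.2 ∈ B p.1}
  rw [← integral_indicator hAB, integral_prod _ (hf.integrable_indicator hAB),
    ← integral_indicator hA]
  congr 1 with x
  by_cases hx : x ∈ A
  · have hB : MeasurableSet (B x) := by simpa [P, hx] using measurable_prodMk_left (x := x) hAB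
    rw [indicator_of_mem hx, ← integral_indicator hB]
    congr 1 with y
    by_cases hy : y ∈ B x
    · rw [indicator_of_mem (show (x, y) ∈ P from ⟨hx, hy⟩), indicator_of_mem hy]
    · rw [indicator_of_notMem (fun h => hy h.2), indicator_of_notMem hy]
  · rw [indicator_of_notMem hx]
    simp [indicator_of_notMem (fun h : (x, _) ∈ P => hx h.1)]

theorem setIntegral_triangle {g : ℝ × ℝ → ℝ} (hg : Continuous g) {s : ℝ} (hs : 0 ≤ s) :
    ∫ q in {q : ℝ × ℝ | q.1 ∈ Icc 0 s ∧ q.2 ∈ Icc 0 (s - q.1)}, g q =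
      ∫ y in (0:ℝ)..s, ∫ z in (0:ℝ)..(s - y), g (y, z) := by
  rw [Measure.volume_eq_prod, setIntegral_prod_dependent (B := fun y => Icc 0 (s - y))
    measurableSet_Icc (by simp only [mem_Icc]; measurability), integral_Icc_eq_integral_Ioc,
    ← intervalIntegral.integral_of_le hs]
  · refine intervalIntegral.integral_congr fun y hy => ?_
    rw [uIcc_of_le hs] at hy
    rw [integral_Icc_eq_integral_Ioc, ← intervalIntegral.integral_of_le (by linarith [hy.2])]
  · rw [← Measure.volume_eq_prod]
    refine (hg.integrableOn_Icc (a := (0, 0)) (b := (s, s))).mono_set ?_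
    rintro q ⟨⟨h0, h1⟩, h2, h3⟩
    exact ⟨⟨h0, h2⟩, h1, by linarith⟩

theorem integral_pow_mul_sub_pow (s : ℝ) (i j : ℕ) :
    ∫ y in (0:ℝ)..s, y ^ i * (s - y) ^ j = i ! * j ! / (i + j + 1)! * s ^ (i + j + 1) := by
  induction i generalizing j with
  | zero =>
    simp only [pow_zero, one_mul, zero_add]
    rw [intervalIntegral.integral_comp_sub_left (fun y => y ^ j), sub_self, sub_zero, integral_pow,
      Nat.factorial_succ]
    push_cast
    field_simp
    ring
  | succ i ih =>
    have hparts := intervalIntegral.integral_mul_deriv_eq_deriv_mul (a := 0) (b := s)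
      (u := fun y => y ^ (i + 1)) (u' := fun y => (i + 1 : ℝ) * y ^ i)
      (v := fun y => -(s - y) ^ (j + 1) / (j + 1)) (v' := fun y => (s - y) ^ j)
      (fun y _ => by simpa using hasDerivAt_pow (i + 1) y)
      (fun y _ => by
        convert ((((hasDerivAt_id y).const_sub s).pow (j + 1)).neg.div_const (j + 1 : ℝ)) using 1
        · funext y; simp [neg_div]
        · simp only [id, Nat.add_sub_cancel]; push_cast; field_simp)
      (by apply Continuous.intervalIntegrable; fun_prop)
      (by apply Continuous.intervalIntegrable; fun_prop)
    have hrest : ∫ y in (0:ℝ)..s, (i + 1 : ℝ) * y ^ i * (-(s - y) ^ (j + 1) / (j + 1)) =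
        -((i + 1) / (j + 1) * ∫ y in (0:ℝ)..s, y ^ i * (s - y) ^ (j + 1)) := by
      rw [← intervalIntegral.integral_const_mul, ← intervalIntegral.integral_neg]
      congr 1 with y
      ring
    rw [hparts, hrest, ih (j + 1), show i + (j + 1) + 1 = i + 1 + j + 1 by ring]
    simp only [sub_self, zero_pow (Nat.succ_ne_zero _), neg_zero, zero_div, mul_zero]
    push_cast [Nat.factorial_succ]
    field_simp
    ring

def cornerTetra : Set (Fin 3 → ℝ) := {x | (∀ i, 0 ≤ x i) ∧ ∑ i, x i ≤ 1}

theorem convex_cornerTetra : Convex ℝ cornerTetra := by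
  rintro x ⟨hx, hxs⟩ y ⟨hy, hys⟩ a b ha hb hab
  simp only [cornerTetra, mem_ofPred_eq, Pi.add_apply, Pi.smul_apply, smul_eq_mul,
    Finset.sum_add_distrib, ← Finset.mul_sum]
  exact ⟨fun i => add_nonneg (mul_nonneg ha (hx i)) (mul_nonneg hb (hy i)), by nlinarith⟩

theorem convexHull_vertices_eq_cornerTetra :
    convexHull ℝ {0, Pi.single 0 1, Pi.single 1 1, Pi.single 2 1} = cornerTetra := by
  refine (convexHull_min ?_ convex_cornerTetra).antisymm fun x ⟨hx, hxs⟩ => ?_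
  · rintro _ (rfl | rfl | rfl | rfl)
    · exact ⟨fun _ => le_rfl, by simp⟩
    all_goals exact ⟨fun i => by simp only [Pi.single_apply]; split_ifs <;> norm_num, by simp⟩
  · have hmem := (convex_convexHull ℝ {0, Pi.single 0 1, Pi.single 1 1, Pi.single 2 1}).sum_mem
      (t := Finset.univ) (w := ![1 - ∑ i, x i, x 0, x 1, x 2])
      (z := ![(0 : Fin 3 → ℝ), Pi.single 0 1, Pi.single 1 1, Pi.single 2 1]) ?_ ?_ ?_
    · convert hmem using 1
      ext j
      fin_cases j <;> simp [Fin.sum_univ_four]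
    · intro i _
      fin_cases i <;> simp [hx, hxs]
    · simp [Fin.sum_univ_four, Fin.sum_univ_three]
      ring
    · intro i _
      apply subset_convexHull
      fin_cases i <;> simp

theorem isCompact_cornerTetra : IsCompact cornerTetra :=
  convexHull_vertices_eq_cornerTetra ▸ (toFinite _).isCompact_convexHull ℝ

theorem measurableSet_cornerTetra : MeasurableSet cornerTetra :=
  isCompact_cornerTetra.isClosed.measurableSet

theorem Continuous.integrableOn_cornerTetra {f : (Fin 3 → ℝ) → ℝ} (hf : Continuous f) :
    IntegrableOn f cornerTetra :=
  hf.continuousOn.integrableOn_compact isCompact_cornerTetra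

def finThreeArrowEquiv : (Fin 3 → ℝ) ≃ᵐ ℝ × ℝ × ℝ :=
  (MeasurableEquiv.piFinSuccAbove (fun _ => ℝ) 0).trans
    ((MeasurableEquiv.refl ℝ).prodCongr MeasurableEquiv.finTwoArrow)

theorem finThreeArrowEquiv_apply (u : Fin 3 → ℝ) :
    finThreeArrowEquiv u = (u 0, u 1, u 2) := rfl

theorem measurePreserving_finThreeArrowEquiv :
    MeasurePreserving finThreeArrowEquiv volume volume :=
  ((MeasurePreserving.id volume).prod (volume_preserving_finTwoArrow ℝ)).comp
    (volume_preserving_piFinSuccAbove (fun _ => ℝ) 0)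

theorem setIntegral_cornerTetra_eq_iterated {f : (Fin 3 → ℝ) → ℝ} (hf : Continuous f) :
    ∫ u in cornerTetra, f u =
      ∫ x in (0:ℝ)..1, ∫ y in (0:ℝ)..(1 - x), ∫ z in (0:ℝ)..(1 - x - y), f ![x, y, z] := by
  set g : ℝ × ℝ × ℝ → ℝ := fun p => f ![p.1, p.2.1, p.2.2]
  let tri : ℝ → Set (ℝ × ℝ) := fun s => {q | q.1 ∈ Icc 0 s ∧ q.2 ∈ Icc 0 (s - q.1)}
  have hpre : cornerTetra =
      finThreeArrowEquiv ⁻¹' {p | p.1 ∈ Icc 0 1 ∧ p.2 ∈ tri (1 - p.1)} := by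
    ext u
    simp only [cornerTetra, Fin.sum_univ_three, mem_preimage, mem_ofPred_eq, tri, mem_Icc,
      finThreeArrowEquiv_apply]
    constructor
    · rintro ⟨h, hs⟩
      refine ⟨⟨h 0, ?_⟩, ⟨h 1, ?_⟩, h 2, ?_⟩ <;> linarith [h 0, h 1, h 2]
    · rintro ⟨⟨h0, -⟩, ⟨h1, -⟩, h2, h3⟩
      exact ⟨fun i => by fin_cases i <;> assumption, by linarith⟩
  have hfg : ∫ u in cornerTetra, f u = ∫ u in cornerTetra, g (finThreeArrowEquiv u) := by
    congr with u
    simp only [g, finThreeArrowEquiv_apply]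
    congr
    ext i
    fin_cases i <;> rfl
  have hslice : ∀ x ∈ Icc (0:ℝ) 1, ∫ q in tri (1 - x), g (x, q) =
      ∫ y in (0:ℝ)..(1 - x), ∫ z in (0:ℝ)..(1 - x - y), f ![x, y, z] := fun x hx =>
    setIntegral_triangle (g := fun q => g (x, q)) (by fun_prop) (by linarith [hx.2])
  rw [hfg, hpre, measurePreserving_finThreeArrowEquiv.setIntegral_preimage_emb
      finThreeArrowEquiv.measurableEmbedding, Measure.volume_eq_prod,
    setIntegral_prod_dependent (B := fun x => tri (1 - x)) measurableSet_Icc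
      (by simp only [tri, mem_Icc]; measurability),
    setIntegral_congr_fun measurableSet_Icc hslice, integral_Icc_eq_integral_Ioc,
    ← intervalIntegral.integral_of_le zero_le_one]
  rw [← Measure.volume_eq_prod]
  refine (Continuous.integrableOn_Icc (a := 0) (b := 1) (by fun_prop)).mono_set ?_
  rintro p ⟨⟨h0, h1⟩, ⟨h2, h3⟩, h4, h5⟩
  exact ⟨⟨h0, h2, h4⟩, h1, by simp only [Prod.snd_one, Prod.fst_one]; linarith,
    by simp only [Prod.snd_one]; linarith⟩

theorem integral_cornerTetra_monomial (a b c : ℕ) :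
    ∫ u in cornerTetra, u 0 ^ a * u 1 ^ b * u 2 ^ c = a ! * b ! * c ! / (a + b + c + 3)! := by
  have hz : ∀ x y : ℝ, ∫ z in (0:ℝ)..(1 - x - y), x ^ a * y ^ b * z ^ c =
      x ^ a / (c + 1) * (y ^ b * (1 - x - y) ^ (c + 1)) := fun x y => by
    rw [intervalIntegral.integral_const_mul, integral_pow, zero_pow (Nat.succ_ne_zero c),
      sub_zero]
    ring
  have hy : ∀ x : ℝ, ∫ y in (0:ℝ)..(1 - x), x ^ a / (c + 1) * (y ^ b * (1 - x - y) ^ (c + 1)) =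
      b ! * (c + 1)! / (b + (c + 1) + 1)! / (c + 1) * (x ^ a * (1 - x) ^ (b + (c + 1) + 1)) :=
      fun x => by
    rw [intervalIntegral.integral_const_mul, integral_pow_mul_sub_pow]
    ring
  rw [setIntegral_cornerTetra_eq_iterated (by fun_prop)]
  simp only [Matrix.cons_val_zero, Matrix.cons_val_one, Matrix.cons_val_two, Matrix.head_cons,
    Matrix.tail_cons, hz, hy]
  rw [intervalIntegral.integral_const_mul, integral_pow_mul_sub_pow,
    show a + (b + (c + 1) + 1) + 1 = a + b + c + 3 by ring, Nat.factorial_succ c, one_pow]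
  push_cast
  field_simp

theorem volume_cornerTetra : volume cornerTetra = ENNReal.ofReal (1 / 6) := by
  have h := integral_cornerTetra_monomial 0 0 0
  simp only [pow_zero, mul_one, setIntegral_const, smul_eq_mul] at h
  norm_num [Nat.factorial] at h
  rw [← h, Measure.real, ENNReal.ofReal_toReal isCompact_cornerTetra.measure_lt_top.ne]

theorem integral_cornerTetra_coord (i : Fin 3) : ∫ u in cornerTetra, u i = 1 / 24 := by
  fin_cases i
  · simpa [Nat.factorial] using integral_cornerTetra_monomial 1 0 0
  · simpa [Nat.factorial] using integral_cornerTetra_monomial 0 1 0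
  · simpa [Nat.factorial] using integral_cornerTetra_monomial 0 0 1

theorem integral_cornerTetra_coord_mul (i j : Fin 3) :
    ∫ u in cornerTetra, u i * u j = (if i = j then 2 else 1) / 120 := by
  wlog hij : i ≤ j
  · simpa [mul_comm, eq_comm] using this j i (le_of_not_ge hij)
  fin_cases i <;> fin_cases j <;> simp at hij
  · simpa [Nat.factorial, sq] using integral_cornerTetra_monomial 2 0 0
  · simpa [Nat.factorial] using integral_cornerTetra_monomial 1 1 0
  · simpa [Nat.factorial] using integral_cornerTetra_monomial 1 0 1
  · simpa [Nat.factorial, sq] using integral_cornerTetra_monomial 0 2 0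
  · simpa [Nat.factorial] using integral_cornerTetra_monomial 0 1 1
  · simpa [Nat.factorial, sq] using integral_cornerTetra_monomial 0 0 2

/-- The weight 16 at the centroid: for affine `ℓ` the moments give
`∫ ℓ² = (Σₖ ℓ(pₖ)² + (Σₖ ℓ(pₖ))²) / 120` over the vertices `pₖ`, and `Σₖ ℓ(pₖ) = 4 ℓ(centroid)`. -/
noncomputable def tetraQuad (g : (Fin 3 → ℝ) → ℝ) : ℝ :=
  (g 0 + g (Pi.single 0 1) + g (Pi.single 1 1) + g (Pi.single 2 1) + 16 * g fun _ => 1 / 4) / 120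

theorem integral_tetraQuad {X : Type*} [MeasurableSpace X] {μ : Measure X}
    {G : X → (Fin 3 → ℝ) → ℝ} (hG : ∀ v, Integrable (G · v) μ) :
    ∫ x, tetraQuad (G x) ∂μ = tetraQuad fun v => ∫ x, G x v ∂μ := by
  simp only [tetraQuad]
  rw [integral_div, integral_add, integral_add, integral_add, integral_add, integral_const_mul]
  all_goals fun_prop

@[fun_prop]
theorem Continuous.tetraQuad {α : Type*} [TopologicalSpace α] {G : α → (Fin 3 → ℝ) → ℝ}
    (hG : ∀ v, Continuous (G · v)) : Continuous fun a => _root_.tetraQuad (G a) := by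
  simp only [_root_.tetraQuad]
  fun_prop

theorem integral_cornerTetra_sq_of_affine {f : (Fin 3 → ℝ) → ℝ}
    (hf : ∀ u, f u = f 0 + ∑ i, (f (Pi.single i 1) - f 0) * u i) :
    ∫ u in cornerTetra, f u ^ 2 = tetraQuad fun u => f u ^ 2 := by
  set a := f 0
  set b : Fin 3 → ℝ := fun i => f (Pi.single i 1) - a
  have hexp : ∀ u, f u ^ 2 =
      a ^ 2 + (∑ i, 2 * a * b i * u i + ∑ i, ∑ j, b i * b j * (u i * u j)) := fun u => by
    rw [hf u]
    simp only [Fin.sum_univ_three]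
    ring
  have hsecond : ∀ i, ∫ u in cornerTetra, ∑ j, b i * b j * (u i * u j) =
      ∑ j, b i * b j * ((if i = j then 2 else 1) / 120) := fun i => by
    rw [integral_finsetSum _ fun j _ => Continuous.integrableOn_cornerTetra (by fun_prop)]
    simp_rw [integral_const_mul, integral_cornerTetra_coord_mul]
  simp_rw [hexp]
  rw [integral_add (Continuous.integrableOn_cornerTetra (by fun_prop))
      (Continuous.integrableOn_cornerTetra (by fun_prop)),
    integral_add (Continuous.integrableOn_cornerTetra (by fun_prop))
      (Continuous.integrableOn_cornerTetra (by fun_prop)),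
    integral_finsetSum _ fun i _ => Continuous.integrableOn_cornerTetra (by fun_prop),
    integral_finsetSum _ fun i _ => Continuous.integrableOn_cornerTetra (by fun_prop)]
  simp_rw [hsecond, integral_const_mul, integral_cornerTetra_coord, setIntegral_const]
  simp [tetraQuad, Fin.sum_univ_three, volume_cornerTetra, Measure.real]
  ring

def tetraAffineMap (p : Fin 3 → ℝ) (a : Fin 3 → Fin 3 → ℝ) : (Fin 3 → ℝ) →ᵃ[ℝ] (Fin 3 → ℝ) :=
  (Matrix.of a).vecMulLinear.toAffineMap + AffineMap.const ℝ (Fin 3 → ℝ) p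

theorem tetraAffineMap_apply (p : Fin 3 → ℝ) (a : Fin 3 → Fin 3 → ℝ) (u : Fin 3 → ℝ) :
    tetraAffineMap p a u = ∑ i, u i • a i + p := by
  ext j
  simp [tetraAffineMap, Matrix.vecMul, dotProduct]

theorem det_tetraAffineMap_linear (p : Fin 3 → ℝ) (a : Fin 3 → Fin 3 → ℝ) :
    LinearMap.det (tetraAffineMap p a).linear = (Matrix.of a).det := by
  rw [tetraAffineMap, AffineMap.add_linear, AffineMap.const_linear, add_zero,
    LinearMap.toAffineMap_linear, ← Matrix.mulVecLin_transpose, ← Matrix.toLin'_apply',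
    LinearMap.det_toLin', Matrix.det_transpose]

theorem tetraAffineMap_image_cornerTetra (p : Fin 3 → ℝ) (a : Fin 3 → Fin 3 → ℝ) :
    tetraAffineMap p a '' cornerTetra = convexHull ℝ {p, a 0 + p, a 1 + p, a 2 + p} := by
  rw [← convexHull_vertices_eq_cornerTetra, AffineMap.image_convexHull]
  simp [image_insert_eq, tetraAffineMap_apply]

noncomputable def tetraDet (p q r s : Fin 3 → ℝ) : ℝ := (Matrix.of ![q - p, r - p, s - p]).det

@[fun_prop]
theorem Continuous.tetraDet {α : Type*} [TopologicalSpace α] {p q r s : α → Fin 3 → ℝ}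
    (hp : Continuous p) (hq : Continuous q) (hr : Continuous r) (hs : Continuous s) :
    Continuous fun a => _root_.tetraDet (p a) (q a) (r a) (s a) := by
  simp only [_root_.tetraDet, Matrix.det_fin_three]
  fun_prop

theorem volume_convexHull_tetra (p q r s : Fin 3 → ℝ) :
    volume (convexHull ℝ {p, q, r, s}) = ENNReal.ofReal (|tetraDet p q r s| / 6) := by
  have himage := tetraAffineMap_image_cornerTetra p ![q - p, r - p, s - p]
  simp only [Matrix.cons_val_zero, Matrix.cons_val_one, Matrix.cons_val_two, Matrix.head_cons,
    Matrix.tail_cons, sub_add_cancel] at himage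
  rw [← himage, addHaar_image_affineMap, det_tetraAffineMap_linear, volume_cornerTetra,
    ← ENNReal.ofReal_mul (abs_nonneg _), tetraDet]
  ring_nf

theorem volume_convexHull_affineMap_tetra (f : (Fin 3 → ℝ) →ᵃ[ℝ] (Fin 3 → ℝ))
    (p q r s : Fin 3 → ℝ) :
    volume (convexHull ℝ {f p, f q, f r, f s}) =
      ENNReal.ofReal (|LinearMap.det f.linear| * (|tetraDet p q r s| / 6)) := by
  rw [show {f p, f q, f r, f s} = f '' {p, q, r, s} by simp [image_insert_eq],
    ← f.image_convexHull, addHaar_image_affineMap, volume_convexHull_tetra,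
    ← ENNReal.ofReal_mul (abs_nonneg _)]

theorem convexHull_range_eq_image_cornerTetra (v : Fin 4 → Fin 3 → ℝ) :
    convexHull ℝ (range v) =
      tetraAffineMap (v 3) ![v 0 - v 3, v 1 - v 3, v 2 - v 3] '' cornerTetra := by
  rw [tetraAffineMap_image_cornerTetra]
  simp only [Matrix.cons_val_zero, Matrix.cons_val_one, Matrix.cons_val_two, Matrix.head_cons,
    Matrix.tail_cons, sub_add_cancel]
  congr 1
  ext x
  simp [Fin.exists_fin_succ]
  tauto

theorem integral_cornerTetra_tetraDet_sq (s : Fin 3 → ℝ) :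
    ∫ u₁ in cornerTetra, ∫ u₂ in cornerTetra, ∫ u₃ in cornerTetra, tetraDet u₁ u₂ u₃ s ^ 2 =
      tetraQuad fun u₃ => tetraQuad fun u₂ => tetraQuad fun u₁ => tetraDet u₁ u₂ u₃ s ^ 2 := by
  have h₃ : ∀ u₁ u₂, ∫ u₃ in cornerTetra, tetraDet u₁ u₂ u₃ s ^ 2 =
      tetraQuad fun u₃ => tetraDet u₁ u₂ u₃ s ^ 2 := fun u₁ u₂ =>
    integral_cornerTetra_sq_of_affine fun u => by
      simp [tetraDet, Matrix.det_fin_three, Fin.sum_univ_three]; ring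
  have h₂ : ∀ u₁ u₃, ∫ u₂ in cornerTetra, tetraDet u₁ u₂ u₃ s ^ 2 =
      tetraQuad fun u₂ => tetraDet u₁ u₂ u₃ s ^ 2 := fun u₁ u₃ =>
    integral_cornerTetra_sq_of_affine fun u => by
      simp [tetraDet, Matrix.det_fin_three, Fin.sum_univ_three]; ring
  have h₁ : ∀ u₂ u₃, ∫ u₁ in cornerTetra, tetraDet u₁ u₂ u₃ s ^ 2 =
      tetraQuad fun u₁ => tetraDet u₁ u₂ u₃ s ^ 2 := fun u₂ u₃ =>
    integral_cornerTetra_sq_of_affine fun u => by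
      simp [tetraDet, Matrix.det_fin_three, Fin.sum_univ_three]; ring
  calc ∫ u₁ in cornerTetra, ∫ u₂ in cornerTetra, ∫ u₃ in cornerTetra, tetraDet u₁ u₂ u₃ s ^ 2
      = ∫ u₁ in cornerTetra, ∫ u₂ in cornerTetra, tetraQuad fun u₃ => tetraDet u₁ u₂ u₃ s ^ 2 := by
        simp_rw [h₃]
    _ = ∫ u₁ in cornerTetra, tetraQuad fun u₃ => tetraQuad fun u₂ => tetraDet u₁ u₂ u₃ s ^ 2 := by
        congr with u₁
        rw [integral_tetraQuad fun _ => Continuous.integrableOn_cornerTetra (by fun_prop)]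
        simp_rw [h₂]
    _ = tetraQuad fun u₃ => tetraQuad fun u₂ => tetraQuad fun u₁ => tetraDet u₁ u₂ u₃ s ^ 2 := by
        rw [integral_tetraQuad fun _ => Continuous.integrableOn_cornerTetra (by fun_prop)]
        congr with u₃
        rw [integral_tetraQuad fun _ => Continuous.integrableOn_cornerTetra (by fun_prop)]
        simp_rw [h₁]

theorem tetraQuad_tetraDet_sq_facetCentroid :
    (tetraQuad fun u₃ => tetraQuad fun u₂ => tetraQuad fun u₁ =>
      tetraDet u₁ u₂ u₃ (fun _ => 1 / 3) ^ 2) = 1 / 432000 := by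
  simp [tetraQuad, tetraDet, Matrix.det_fin_three]
  norm_num

theorem moment_2_general (v : Fin 4 → (Fin 3 → ℝ))
    (T : Set (Fin 3 → ℝ))
    (hT : T = convexHull ℝ (Set.range v)) (hvol : volume T = 1)
    (c : Fin 3 → ℝ) (hc : c = (3:ℝ)⁻¹ • (v 0 + v 1 + v 2)) :
    (∫ x₁ in T, ∫ x₂ in T, ∫ x₃ in T,
        (volume (convexHull ℝ ({x₁, x₂, x₃, c} : Set (Fin 3 → ℝ)))).toReal ^ 2)
      = 1 / 2000 := by
  set A := tetraAffineMap (v 3) ![v 0 - v 3, v 1 - v 3, v 2 - v 3]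
  have hTA : T = A '' cornerTetra := hT.trans (convexHull_range_eq_image_cornerTetra v)
  have hdet : |LinearMap.det A.linear| = 6 := by
    rw [hTA, addHaar_image_affineMap, volume_cornerTetra, ← ENNReal.ofReal_mul (abs_nonneg _),
      ENNReal.ofReal_eq_one] at hvol
    linarith
  have hA : Function.Injective A :=
    A.injective_of_det_linear_ne_zero fun h => by norm_num [h] at hdet
  have hcA : c = A fun _ => 1 / 3 := by
    ext i
    simp [hc, A, tetraAffineMap_apply, Fin.sum_univ_three]
    ring
  have hchange : ∀ g : (Fin 3 → ℝ) → ℝ, ∫ x in T, g x = 6 * ∫ u in cornerTetra, g (A u) :=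
    fun g => by
      rw [hTA, setIntegral_image_affineMap volume A hA measurableSet_cornerTetra, hdet, smul_eq_mul]
  have hvolA : ∀ u₁ u₂ u₃, (volume (convexHull ℝ {A u₁, A u₂, A u₃, c})).toReal ^ 2 =
      tetraDet u₁ u₂ u₃ (fun _ => 1 / 3) ^ 2 := fun u₁ u₂ u₃ => by
    rw [hcA, volume_convexHull_affineMap_tetra, hdet, ENNReal.toReal_ofReal (by positivity),
      mul_div_cancel₀ _ (by norm_num : (6:ℝ) ≠ 0), sq_abs]
  simp only [hchange, hvolA, integral_const_mul, integral_cornerTetra_tetraDet_sq,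
    tetraQuad_tetraDet_sq_facetCentroid]
  norm_num

theorem moment_2 (v : Fin 4 → (Fin 3 → ℝ))
    (hv : AffineIndependent ℝ v) (T : Set (Fin 3 → ℝ))
    (hT : T = convexHull ℝ (Set.range v)) (hvol : volume T = 1)
    (c : Fin 3 → ℝ) (hc : c = (3:ℝ)⁻¹ • (v 0 + v 1 + v 2)) :
    (∫ x₁ in T, ∫ x₂ in T, ∫ x₃ in T,
        (volume (convexHull ℝ ({x₁, x₂, x₃, c} : Set (Fin 3 → ℝ)))).toReal ^ 2)
      = 1 / 2000 :=
  moment_2_general v T hT hvol c hc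
end
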